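/- (Theorem 1, mean-field equilibrium property) If the family θ satisfies the fixed-point property, then the strategy induced by θ is optimal against itself: for every Markov policy σ, every t ∈ {1,…,T}, z ∈ PMF X and x ∈ X, J_t^{θ}(z,x) ≥ J_t^{σ}(z,x), where in both returns the mean-field flow is the equilibrium flow generated by θ. -/

import Mathlib

/-!
Along the equilibrium flow the individual agent faces an ordinary finite-horizon Markov decision
problem, so the argument is backward induction. Splitting off the first step of a trajectory
shows that the path-sum return of any Markov policy `σ` obeys the Bellman recursion
`J_t = ∑ₐ σ_t(a) (R + δ ∑ τ J_{t+1})`, the flow being advanced by `φ(z, θ_t z)`. For `σ = θ`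
this is the recursion defining `V`, so `J^θ = V`. For general `σ`, bounding `J^σ_{t+1}` by
`V_{t+1}` (here `δ ≥ 0` is needed) turns the right-hand side into `∑ₐ σ_t(a) Q_t(a)`, which the
fixed-point property bounds by `V_t`.
-/

open scoped BigOperators ENNReal

section MFG

variable {X A : Type*} [Fintype X] [Fintype A] [Nonempty X] [Nonempty A]

/-- McKean–Vlasov update: `phi τ z γ (y) = ∑ x, ∑ a, z x * γ x a * τ x a z y`. -/
noncomputable def phi (τ : X → A → PMF X → PMF X) (z : PMF X) (γ : X → PMF A) : PMF X :=
  z.bind fun x => (γ x).bind fun a => τ x a z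

/-- Backward-recursive value function with `V (T+1) = 0`. -/
noncomputable def V (τ : X → A → PMF X → PMF X) (R : X → A → PMF X → ℝ) (δ : ℝ)
    (T : ℕ) (θ : ℕ → PMF X → X → PMF A) (t : ℕ) (z : PMF X) (x : X) : ℝ :=
  if h : T < t then 0
  else
    ∑ a : A, ((θ t z x) a).toReal *
      (R x a z + δ * ∑ x' : X, ((τ x a z) x').toReal *
        V τ R δ T θ (t + 1) (phi τ z (θ t z)) x')
termination_by T + 1 - t
decreasing_by omega

/-- Action-value function `Q_t(z,x,a,γ)`. -/
noncomputable def Q (τ : X → A → PMF X → PMF X) (R : X → A → PMF X → ℝ) (δ : ℝ)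
    (T : ℕ) (θ : ℕ → PMF X → X → PMF A) (t : ℕ) (z : PMF X) (x : X) (a : A)
    (γ : X → PMF A) : ℝ :=
  R x a z + δ * ∑ x' : X, ((τ x a z) x').toReal * V τ R δ T θ (t + 1) (phi τ z γ) x'

/-- The fixed-point property of the equilibrium generating family `θ`. -/
def IsFixedPoint (τ : X → A → PMF X → PMF X) (R : X → A → PMF X → ℝ) (δ : ℝ)
    (T : ℕ) (θ : ℕ → PMF X → X → PMF A) : Prop :=
  ∀ t, 1 ≤ t → t ≤ T → ∀ (z : PMF X) (x : X) (π : PMF A),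
    ∑ a : A, ((θ t z x) a).toReal * Q τ R δ T θ t z x a (θ t z) ≥
      ∑ a : A, (π a).toReal * Q τ R δ T θ t z x a (θ t z)

/-- Mean-field flow generated by the policy `θ`, started from `z` at time `t`:
`flow τ θ t z n = z_{t+n}`. -/
noncomputable def flow (τ : X → A → PMF X → PMF X) (θ : ℕ → PMF X → X → PMF A)
    (t : ℕ) (z : PMF X) : ℕ → PMF X
  | 0 => z
  | n + 1 => phi τ (flow τ θ t z n) (θ (t + n) (flow τ θ t z n))

/-- Individual state trajectory: `traj x xs 0 = x`, `traj x xs (i+1) = xs i`. -/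
def traj {n : ℕ} (x : X) (xs : Fin n → X) : Fin (n + 1) → X := Fin.cases x xs

/-- Path-sum expected discounted return `J_t^σ(z,x)` of the Markov policy `σ`,
against the mean-field flow generated by `θ` started from `z` at time `t`. -/
noncomputable def J (τ : X → A → PMF X → PMF X) (R : X → A → PMF X → ℝ) (δ : ℝ)
    (T : ℕ) (θ σ : ℕ → PMF X → X → PMF A) (t : ℕ) (z : PMF X) (x : X) : ℝ :=
  ∑ as : Fin (T - t + 1) → A, ∑ xs : Fin (T - t) → X,
    ((∏ k : Fin (T - t + 1),
        ((σ (t + (k : ℕ)) (flow τ θ t z (k : ℕ)) (traj x xs k)) (as k)).toReal) *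
      (∏ k : Fin (T - t),
        ((τ (traj x xs k.castSucc) (as k.castSucc) (flow τ θ t z (k : ℕ)))
          (traj x xs k.succ)).toReal)) *
    (∑ k : Fin (T - t + 1),
      δ ^ (k : ℕ) * R (traj x xs k) (as k) (flow τ θ t z (k : ℕ)))

theorem PMF.sum_toReal_eq_one {α : Type*} [Fintype α] (p : PMF α) : ∑ a, (p a).toReal = 1 := by
  rw [← ENNReal.toReal_sum fun a _ => p.apply_ne_top a,
    ← tsum_fintype (L := .unconditional α), p.tsum_coe, ENNReal.toReal_one]

theorem Fin.sum_pi_succ {α M : Type*} [Fintype α] [AddCommMonoid M] {n : ℕ}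
    (f : (Fin (n + 1) → α) → M) : ∑ g, f g = ∑ a, ∑ g : Fin n → α, f (Fin.cons a g) := by
  rw [← (Fin.consEquiv fun _ => α).sum_comp f, Fintype.sum_prod_type]
  rfl

section Paths

omit [Fintype X] [Fintype A] [Nonempty X] [Nonempty A]

variable (τ : X → A → PMF X → PMF X) (R : X → A → PMF X → ℝ) (δ : ℝ)
  (θ σ : ℕ → PMF X → X → PMF A)

noncomputable def pathWeight (t n : ℕ) (z : PMF X) (x : X) (as : Fin (n + 1) → A)
    (xs : Fin n → X) : ℝ :=
  (∏ k : Fin (n + 1),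
      ((σ (t + (k : ℕ)) (flow τ θ t z (k : ℕ)) (traj x xs k)) (as k)).toReal) *
    ∏ k : Fin n,
      ((τ (traj x xs k.castSucc) (as k.castSucc) (flow τ θ t z (k : ℕ)))
        (traj x xs k.succ)).toReal

noncomputable def pathReward (t n : ℕ) (z : PMF X) (x : X) (as : Fin (n + 1) → A)
    (xs : Fin n → X) : ℝ :=
  ∑ k : Fin (n + 1), δ ^ (k : ℕ) * R (traj x xs k) (as k) (flow τ θ t z (k : ℕ))

variable {τ R δ θ σ}

theorem flow_succ_eq_flow_phi (t : ℕ) (z : PMF X) (k : ℕ) :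
    flow τ θ t z (k + 1) = flow τ θ (t + 1) (phi τ z (θ t z)) k := by
  induction k with
  | zero => rfl
  | succ k ih => rw [flow, ih, flow, Nat.add_right_comm, Nat.add_assoc]

theorem traj_eq_cons {n : ℕ} (x : X) (xs : Fin n → X) : traj x xs = Fin.cons x xs := rfl

theorem pathWeight_cons (t n : ℕ) (z : PMF X) (x : X) (a : A) (as : Fin (n + 1) → A) (y : X)
    (xs : Fin n → X) :
    pathWeight τ θ σ t (n + 1) z x (Fin.cons a as) (Fin.cons y xs) =
      (σ t z x a).toReal * (τ x a z y).toReal *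
        pathWeight τ θ σ (t + 1) n (phi τ z (θ t z)) y as xs := by
  have hshift : ∀ k : ℕ, t + 1 + k = t + (k + 1) := fun k => by omega
  rw [pathWeight, pathWeight]
  conv_lhs => rw [Fin.prod_univ_succ]; arg 2; rw [Fin.prod_univ_succ]
  simp only [traj_eq_cons, Fin.cons_zero, Fin.cons_succ, Fin.castSucc_zero,
    ← Fin.succ_castSucc, Fin.val_zero, Fin.val_succ, flow_succ_eq_flow_phi, hshift,
    Nat.add_zero, flow.eq_1]
  ring

theorem pathReward_cons (t n : ℕ) (z : PMF X) (x : X) (a : A) (as : Fin (n + 1) → A) (y : X)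
    (xs : Fin n → X) :
    pathReward τ R δ θ t (n + 1) z x (Fin.cons a as) (Fin.cons y xs) =
      R x a z + δ * pathReward τ R δ θ (t + 1) n (phi τ z (θ t z)) y as xs := by
  rw [pathReward, pathReward, Fin.sum_univ_succ]
  simp only [traj_eq_cons, Fin.cons_zero, Fin.cons_succ, Fin.val_zero, Fin.val_succ,
    flow_succ_eq_flow_phi, flow.eq_1, pow_zero, one_mul, pow_succ', mul_assoc, Finset.mul_sum]

end Paths

section Return

omit [Nonempty X] [Nonempty A]

variable (τ : X → A → PMF X → PMF X) (R : X → A → PMF X → ℝ) (δ : ℝ)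
  (θ σ : ℕ → PMF X → X → PMF A)

noncomputable def pathReturn (t n : ℕ) (z : PMF X) (x : X) : ℝ :=
  ∑ as : Fin (n + 1) → A, ∑ xs : Fin n → X,
    pathWeight τ θ σ t n z x as xs * pathReward τ R δ θ t n z x as xs

variable {τ R δ θ σ}

theorem J_eq_pathReturn (T t : ℕ) (z : PMF X) (x : X) :
    J τ R δ T θ σ t z x = pathReturn τ R δ θ σ t (T - t) z x := rfl

theorem sum_pathWeight_succ_mul (t n : ℕ) (z : PMF X) (x : X)
    (F : (Fin (n + 2) → A) → (Fin (n + 1) → X) → ℝ) :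
    ∑ as, ∑ xs, pathWeight τ θ σ t (n + 1) z x as xs * F as xs =
      ∑ a, (σ t z x a).toReal * ∑ y, (τ x a z y).toReal *
        ∑ as, ∑ xs, pathWeight τ θ σ (t + 1) n (phi τ z (θ t z)) y as xs *
          F (Fin.cons a as) (Fin.cons y xs) := by
  conv_lhs => rw [Fin.sum_pi_succ]; enter [2, a, 2, as]; rw [Fin.sum_pi_succ]
  refine Finset.sum_congr rfl fun a _ => ?_
  rw [Finset.sum_comm]
  simp only [pathWeight_cons, Finset.mul_sum, mul_assoc]

theorem sum_pathWeight (t n : ℕ) (z : PMF X) (x : X) :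
    ∑ as, ∑ xs, pathWeight τ θ σ t n z x as xs = 1 := by
  induction n generalizing t z x with
  | zero => simp [pathWeight, Fin.sum_pi_succ, traj_eq_cons, flow.eq_1, PMF.sum_toReal_eq_one]
  | succ n ih =>
    simpa only [mul_one, ih, PMF.sum_toReal_eq_one] using
      sum_pathWeight_succ_mul (τ := τ) (θ := θ) (σ := σ) t n z x fun _ _ => 1

theorem pathReturn_zero (t : ℕ) (z : PMF X) (x : X) :
    pathReturn τ R δ θ σ t 0 z x = ∑ a, (σ t z x a).toReal * R x a z := by
  simp [pathReturn, pathWeight, pathReward, Fin.sum_pi_succ, traj_eq_cons, flow.eq_1]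

theorem pathReturn_succ (t n : ℕ) (z : PMF X) (x : X) :
    pathReturn τ R δ θ σ t (n + 1) z x = ∑ a, (σ t z x a).toReal *
      (R x a z + δ * ∑ y, (τ x a z y).toReal *
        pathReturn τ R δ θ σ (t + 1) n (phi τ z (θ t z)) y) := by
  rw [pathReturn, sum_pathWeight_succ_mul]
  refine Finset.sum_congr rfl fun a _ => ?_
  simp only [pathReward_cons, mul_add, Finset.sum_add_distrib, ← Finset.sum_mul, sum_pathWeight,
    one_mul, PMF.sum_toReal_eq_one, mul_left_comm _ δ, ← Finset.mul_sum, pathReturn]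

theorem V_of_lt {T t : ℕ} (h : T < t) (z : PMF X) (x : X) : V τ R δ T θ t z x = 0 := by
  rw [V, dif_pos h]

theorem V_eq_sum_mul_Q {T t : ℕ} (h : t ≤ T) (z : PMF X) (x : X) :
    V τ R δ T θ t z x = ∑ a, (θ t z x a).toReal * Q τ R δ T θ t z x a (θ t z) := by
  rw [V, dif_neg h.not_gt]
  rfl

theorem Q_horizon (T : ℕ) (z : PMF X) (x : X) (a : A) (γ : X → PMF A) :
    Q τ R δ T θ T z x a γ = R x a z := by
  simp [Q, V_of_lt (Nat.lt_succ_self T)]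

theorem IsFixedPoint.sum_mul_Q_le_V {T t : ℕ} (hθ : IsFixedPoint τ R δ T θ) (ht : 1 ≤ t)
    (htT : t ≤ T) (z : PMF X) (x : X) (π : PMF A) :
    ∑ a, (π a).toReal * Q τ R δ T θ t z x a (θ t z) ≤ V τ R δ T θ t z x := by
  rw [V_eq_sum_mul_Q htT]
  exact hθ t ht htT z x π

theorem pathReturn_self_eq_V {T : ℕ} (n t : ℕ) (h : t + n = T) (z : PMF X) (x : X) :
    pathReturn τ R δ θ θ t n z x = V τ R δ T θ t z x := by
  induction n generalizing t z x with
  | zero =>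
    obtain rfl : t = T := h
    simp only [pathReturn_zero, V_eq_sum_mul_Q le_rfl, Q_horizon]
  | succ n ih =>
    rw [pathReturn_succ, V_eq_sum_mul_Q (by omega)]
    simp only [ih (t + 1) (by omega)]
    rfl

theorem pathReturn_le_V {T : ℕ} (hδ : 0 ≤ δ) (hθ : IsFixedPoint τ R δ T θ) (n t : ℕ)
    (ht : 1 ≤ t) (h : t + n = T) (z : PMF X) (x : X) :
    pathReturn τ R δ θ σ t n z x ≤ V τ R δ T θ t z x := by
  induction n generalizing t z x with
  | zero =>
    obtain rfl : t = T := h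
    simpa only [pathReturn_zero, Q_horizon] using hθ.sum_mul_Q_le_V ht le_rfl z x (σ t z x)
  | succ n ih =>
    calc pathReturn τ R δ θ σ t (n + 1) z x
        ≤ ∑ a, (σ t z x a).toReal * (R x a z + δ * ∑ y, (τ x a z y).toReal *
            V τ R δ T θ (t + 1) (phi τ z (θ t z)) y) := by
          rw [pathReturn_succ]
          gcongr with a _ y _
          exact ih (t + 1) (by omega) (by omega) _ y
      _ ≤ V τ R δ T θ t z x := hθ.sum_mul_Q_le_V ht (by omega) z x (σ t z x)

end Return

theorem theta_optimal_against_itself_general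
    (τ : X → A → PMF X → PMF X) (R : X → A → PMF X → ℝ) (δ : ℝ)
    (hδ0 : 0 < δ) (T : ℕ)
    (θ : ℕ → PMF X → X → PMF A) (hθ : IsFixedPoint τ R δ T θ)
    (σ : ℕ → PMF X → X → PMF A)
    (t : ℕ) (ht1 : 1 ≤ t) (htT : t ≤ T) (z : PMF X) (x : X) :
    J τ R δ T θ θ t z x ≥ J τ R δ T θ σ t z x := by
  have hn : t + (T - t) = T := Nat.add_sub_cancel' htT
  rw [ge_iff_le, J_eq_pathReturn, J_eq_pathReturn, pathReturn_self_eq_V (T - t) t hn]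
  exact pathReturn_le_V hδ0.le hθ (T - t) t ht1 hn z x

/-- Theorem 1: the strategy induced by `θ` is optimal against itself:
`J_t^θ(z,x) ≥ J_t^σ(z,x)` for every Markov policy `σ`, against the equilibrium flow. -/
theorem theta_optimal_against_itself
    (τ : X → A → PMF X → PMF X) (R : X → A → PMF X → ℝ) (δ : ℝ)
    (hδ0 : 0 < δ) (hδ1 : δ ≤ 1) (T : ℕ) (hT : 1 ≤ T)
    (θ : ℕ → PMF X → X → PMF A) (hθ : IsFixedPoint τ R δ T θ)
    (σ : ℕ → PMF X → X → PMF A)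
    (t : ℕ) (ht1 : 1 ≤ t) (htT : t ≤ T) (z : PMF X) (x : X) :
    J τ R δ T θ θ t z x ≥ J τ R δ T θ σ t z x :=
  theta_optimal_against_itself_general τ R δ hδ0 T θ hθ σ t ht1 htT z x

end MFG
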